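/- Let (t_n) ⊂ [0,1] and suppose limsup_n (1/n) log t_n = t with −∞ < t < 0 and t_n > 0 for infinitely many n (and t_n not eventually 0). Define a_n = sup_{j ≥ n} (1/j) log t_j and t̂_n = exp( sup_{l ≥ n} l·a_l ). Then t̂_n ∈ (0,1], t̂_n ≥ t_n, t̂_n is nonincreasing, and (1/n) log t̂_n → t. -/

import Mathlib

open Filter Topology

/-- Extended-real logarithm with the convention `log 0 = -∞` (for nonnegative inputs). -/
noncomputable def elog (x : ℝ) : EReal := if x ≤ 0 then ⊥ else ((Real.log x : ℝ) : EReal)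

/-- `aSeq t n = sup_{j ≥ n, j ≥ 1} (1/j) log t_j` in the extended reals. -/
noncomputable def aSeq (t : ℕ → ℝ) (n : ℕ) : EReal :=
  ⨆ j : ℕ, ⨆ (_ : 1 ≤ j ∧ n ≤ j), ((1 / (j:ℝ) : ℝ) : EReal) * elog (t j)

/-- `tHat t n = exp( sup_{l ≥ n, l ≥ 1} l · aSeq t l )`. -/
noncomputable def tHat (t : ℕ → ℝ) (n : ℕ) : ℝ :=
  Real.exp ((⨆ l : ℕ, ⨆ (_ : 1 ≤ l ∧ n ≤ l), ((l:ℝ) : EReal) * aSeq t l).toReal)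

/-!
Write `aₙ = sup_{j ≥ n} (1/j) log tⱼ`, so that `aₙ ↓ t`, and `log t̂ₙ = sup_{l ≥ n} l aₗ`.
Taking `l = n` gives `log t̂ₙ ≥ n aₙ ≥ n t` and `log t̂ₙ ≥ log tₙ`. Conversely, once
`aₗ ≤ c` for all `l ≥ n`, with `t < c ≤ 0`, every term obeys `l aₗ ≤ l c ≤ n c`,
so `(1/n) log t̂ₙ ≤ c`.
-/
noncomputable def tailSup (f : ℕ → EReal) (n : ℕ) : EReal :=
  ⨆ l : ℕ, ⨆ (_ : 1 ≤ l ∧ n ≤ l), f l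

section TailSup

variable {f : ℕ → EReal}

theorem le_tailSup {n l : ℕ} (hl : 1 ≤ l) (hnl : n ≤ l) : f l ≤ tailSup f n :=
  le_iSup₂_of_le l ⟨hl, hnl⟩ le_rfl

theorem tailSup_le {n : ℕ} {c : EReal} (h : ∀ l, 1 ≤ l → n ≤ l → f l ≤ c) :
    tailSup f n ≤ c :=
  iSup₂_le fun l hl => h l hl.1 hl.2

theorem antitone_tailSup : Antitone (tailSup f) := fun _ _ hnm =>
  tailSup_le fun _ hl hml => le_tailSup hl (hnm.trans hml)

theorem limsup_le_tailSup (n : ℕ) : limsup f atTop ≤ tailSup f n :=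
  limsup_le_of_le (h := (eventually_ge_atTop (max 1 n)).mono fun _ hl =>
    le_tailSup (le_of_max_le_left hl) (le_of_max_le_right hl))

theorem eventually_tailSup_le {c : EReal} (hc : limsup f atTop < c) :
    ∀ᶠ n in atTop, tailSup f n ≤ c := by
  obtain ⟨N, hN⟩ := eventually_atTop.1 (eventually_lt_of_limsup_lt hc)
  exact eventually_atTop.2 ⟨N, fun _ hn => tailSup_le fun l _ hnl => (hN l (hn.trans hnl)).le⟩

theorem tailSup_natCast_mul_le {g : ℕ → EReal} {n : ℕ} {c : ℝ} (hc : c ≤ 0)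
    (hg : ∀ l, n ≤ l → g l ≤ c) :
    tailSup (fun l => ((l : ℝ) : EReal) * g l) n ≤ ((n * c : ℝ) : EReal) :=
  tailSup_le fun l _ hnl => calc
    ((l : ℝ) : EReal) * g l ≤ ((l : ℝ) : EReal) * (c : EReal) :=
      mul_le_mul_of_nonneg_left (hg l hnl) (by exact_mod_cast l.cast_nonneg)
    _ = ((l * c : ℝ) : EReal) := (EReal.coe_mul _ _).symm
    _ ≤ ((n * c : ℝ) : EReal) :=
      EReal.coe_le_coe_iff.2 (mul_le_mul_of_nonpos_right (by exact_mod_cast hnl) hc)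

end TailSup

theorem elog_of_pos {x : ℝ} (hx : 0 < x) : elog x = Real.log x := if_neg hx.not_ge

theorem elog_nonpos {x : ℝ} (hx : x ≤ 1) : elog x ≤ 0 := by
  rcases le_or_gt x 0 with h | h
  · simp [elog, h]
  · rw [elog_of_pos h]
    exact_mod_cast Real.log_nonpos h.le hx

noncomputable def logRate (t : ℕ → ℝ) (j : ℕ) : EReal :=
  ((1 / (j : ℝ) : ℝ) : EReal) * elog (t j)

noncomputable abbrev tHatExponent (t : ℕ → ℝ) : ℕ → EReal :=
  tailSup fun l => ((l : ℝ) : EReal) * aSeq t l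

section Envelope

variable {t : ℕ → ℝ} {tt : ℝ}

theorem log_tHat (n : ℕ) : Real.log (tHat t n) = (tHatExponent t n).toReal := Real.log_exp _

theorem logRate_nonpos {j : ℕ} (ht : t j ≤ 1) : logRate t j ≤ 0 := calc
  logRate t j ≤ ((1 / (j : ℝ) : ℝ) : EReal) * 0 :=
    mul_le_mul_of_nonneg_left (elog_nonpos ht)
      (by exact_mod_cast (by positivity : (0 : ℝ) ≤ 1 / j))
  _ = 0 := mul_zero _

theorem aSeq_nonpos (ht : ∀ j, t j ≤ 1) (n : ℕ) : aSeq t n ≤ 0 :=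
  tailSup_le fun _ _ _ => logRate_nonpos (ht _)

theorem tHatExponent_nonpos (ht : ∀ j, t j ≤ 1) (n : ℕ) : tHatExponent t n ≤ 0 := by
  refine (tailSup_natCast_mul_le (n := n) le_rfl fun l _ => aSeq_nonpos ht l).trans_eq ?_
  simp

theorem tHatExponent_ne_top (ht : ∀ j, t j ≤ 1) (n : ℕ) : tHatExponent t n ≠ ⊤ :=
  ne_top_of_le_ne_top EReal.zero_ne_top (tHatExponent_nonpos ht n)

theorem natCast_mul_aSeq_le_tHatExponent {n : ℕ} (hn : 1 ≤ n) :
    ((n : ℝ) : EReal) * aSeq t n ≤ tHatExponent t n :=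
  le_tailSup (f := fun l => ((l : ℝ) : EReal) * aSeq t l) hn le_rfl

theorem log_le_tHatExponent {n : ℕ} (hn : 1 ≤ n) (hpos : 0 < t n) :
    ((Real.log (t n) : ℝ) : EReal) ≤ tHatExponent t n := by
  have hn0 : (n : ℝ) ≠ 0 := by positivity
  calc ((Real.log (t n) : ℝ) : EReal) = ((n : ℝ) : EReal) * logRate t n := by
        rw [logRate, elog_of_pos hpos, ← EReal.coe_mul, ← EReal.coe_mul]
        congr 1
        field_simp
    _ ≤ ((n : ℝ) : EReal) * aSeq t n :=
        mul_le_mul_of_nonneg_left (le_tailSup hn le_rfl) (by exact_mod_cast n.cast_nonneg)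
    _ ≤ tHatExponent t n := natCast_mul_aSeq_le_tHatExponent hn

variable (hlimsup : limsup (logRate t) atTop = (tt : EReal))
include hlimsup

theorem natCast_mul_le_tHatExponent {n : ℕ} (hn : 1 ≤ n) :
    (((n : ℝ) * tt : ℝ) : EReal) ≤ tHatExponent t n := calc
  (((n : ℝ) * tt : ℝ) : EReal) = ((n : ℝ) : EReal) * (tt : EReal) := EReal.coe_mul _ _
  _ ≤ ((n : ℝ) : EReal) * aSeq t n :=
      mul_le_mul_of_nonneg_left (hlimsup ▸ limsup_le_tailSup n) (by exact_mod_cast n.cast_nonneg)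
  _ ≤ tHatExponent t n := natCast_mul_aSeq_le_tHatExponent hn

theorem tHatExponent_ne_bot {n : ℕ} (hn : 1 ≤ n) : tHatExponent t n ≠ ⊥ :=
  ne_bot_of_le_ne_bot (EReal.coe_ne_bot _) (natCast_mul_le_tHatExponent hlimsup hn)

theorem le_inv_mul_log_tHat (ht : ∀ j, t j ≤ 1) {n : ℕ} (hn : 1 ≤ n) :
    tt ≤ 1 / (n : ℝ) * Real.log (tHat t n) := by
  have hn0 : (0 : ℝ) < n := by exact_mod_cast hn
  have h := EReal.toReal_le_toReal (natCast_mul_le_tHatExponent hlimsup hn) (EReal.coe_ne_bot _)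
    (tHatExponent_ne_top ht n)
  rw [EReal.toReal_coe, ← log_tHat] at h
  rw [div_mul_eq_mul_div, one_mul, le_div_iff₀ hn0]
  linarith

theorem eventually_inv_mul_log_tHat_le (ht : ∀ j, t j ≤ 1) {c : ℝ} (hc : tt < c) :
    ∀ᶠ n : ℕ in atTop, 1 / (n : ℝ) * Real.log (tHat t n) ≤ c := by
  have hlt : limsup (logRate t) atTop < (c : EReal) := hlimsup ▸ EReal.coe_lt_coe_iff.2 hc
  filter_upwards [eventually_tailSup_le hlt, eventually_ge_atTop 1] with n hn hn1
  -- clipping at `0` makes `l ↦ l * min c 0` nonincreasing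
  have hclip : ∀ l, n ≤ l → aSeq t l ≤ ((min c 0 : ℝ) : EReal) := fun l hl => by
    rw [EReal.coe_strictMono.monotone.map_min]
    exact le_min ((antitone_tailSup hl).trans hn) (aSeq_nonpos ht l)
  have h := EReal.toReal_le_toReal (tailSup_natCast_mul_le (min_le_right c 0) hclip)
    (tHatExponent_ne_bot hlimsup hn1) (EReal.coe_ne_top _)
  rw [EReal.toReal_coe, ← tHatExponent, ← log_tHat] at h
  have hn0 : (0 : ℝ) < n := by exact_mod_cast hn1
  rw [div_mul_eq_mul_div, one_mul, div_le_iff₀ hn0]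
  nlinarith [min_le_left c 0]

theorem tendsto_inv_mul_log_tHat (ht : ∀ j, t j ≤ 1) :
    Tendsto (fun n : ℕ => 1 / (n : ℝ) * Real.log (tHat t n)) atTop (𝓝 tt) := by
  refine tendsto_order.2 ⟨fun a ha => ?_, fun a ha => ?_⟩
  · filter_upwards [eventually_ge_atTop 1] with n hn
    exact ha.trans_le (le_inv_mul_log_tHat hlimsup ht hn)
  · obtain ⟨c, htc, hca⟩ := exists_between ha
    filter_upwards [eventually_inv_mul_log_tHat_le hlimsup ht htc] with n hn
    exact hn.trans_lt hca

end Envelope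

theorem stmt16_general (t : ℕ → ℝ) (ht : ∀ n, t n ∈ Set.Icc (0:ℝ) 1)
    (tt : ℝ)
    (hlimsup : Filter.limsup (fun n : ℕ => ((1 / (n:ℝ) : ℝ) : EReal) * elog (t n)) atTop
        = (tt : EReal)) :
    (∀ n, 1 ≤ n → tHat t n ∈ Set.Ioc (0:ℝ) 1 ∧ t n ≤ tHat t n)
    ∧ AntitoneOn (tHat t) (Set.Ici 1)
    ∧ Tendsto (fun n : ℕ => (1 / (n:ℝ)) * Real.log (tHat t n)) atTop (nhds tt) := by
  have hle : ∀ j, t j ≤ 1 := fun j => (ht j).2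
  refine ⟨fun n hn => ⟨⟨Real.exp_pos _, ?_⟩, ?_⟩, fun n _ m hm hnm => ?_,
    tendsto_inv_mul_log_tHat hlimsup hle⟩
  · exact Real.exp_le_one_iff.2 (EReal.toReal_nonpos (tHatExponent_nonpos hle n))
  · rcases (ht n).1.eq_or_lt with h | h
    · exact h ▸ (Real.exp_pos _).le
    · calc t n = Real.exp (Real.log (t n)) := (Real.exp_log h).symm
        _ ≤ tHat t n := Real.exp_le_exp.2 <| by
          exact_mod_cast (log_le_tHatExponent hn h).trans
            (EReal.le_coe_toReal (tHatExponent_ne_top hle n))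
  · exact Real.exp_le_exp.2 <| EReal.toReal_le_toReal (antitone_tailSup hnm)
      (tHatExponent_ne_bot hlimsup hm) (tHatExponent_ne_top hle n)

theorem stmt16 (t : ℕ → ℝ) (ht : ∀ n, t n ∈ Set.Icc (0:ℝ) 1)
    (tt : ℝ) (htt : tt < 0)
    (hlimsup : Filter.limsup (fun n : ℕ => ((1 / (n:ℝ) : ℝ) : EReal) * elog (t n)) atTop
        = (tt : EReal))
    (hfreq : ∃ᶠ n in atTop, 0 < t n) :
    (∀ n, 1 ≤ n → tHat t n ∈ Set.Ioc (0:ℝ) 1 ∧ t n ≤ tHat t n)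
    ∧ AntitoneOn (tHat t) (Set.Ici 1)
    ∧ Tendsto (fun n : ℕ => (1 / (n:ℝ)) * Real.log (tHat t n)) atTop (nhds tt) :=
  stmt16_general t ht tt hlimsup
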